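/- Let n ≥ 2 be even and let (α, β) ∈ ℝ² with (α,β) ≠ (0,0). Set M = exp(αX + βY). Then the determinant of the top-right 2×2 block of M is strictly negative: M_{1,2n−1}·M_{2,2n} − M_{1,2n}·M_{2,2n−1} < 0 (indices 1-based). -/

import Mathlib

/-!
The matrix `A = αX + βY` is block-superdiagonal with blocks `B_k = αX_k + βY_k`, so `A ^ n = 0`
and `exp A` is a finite sum in which only `A ^ (n-1)` reaches the top-right block, where it
equals `B_1 ⋯ B_{n-1}`. Hence the determinant of that block is `∏ det B_k / ((n-1)!)²`.
Since `I₂` and `R` are rotations while `T` and `P` are reflections,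
`det B_k = ± c_k² (α² + β²)` with the minus sign exactly at the middle block `k = n/2`.
-/

open Matrix

noncomputable section

def I2 : Matrix (Fin 2) (Fin 2) ℝ := !![1, 0; 0, 1]
def Tm : Matrix (Fin 2) (Fin 2) ℝ := !![1, 0; 0, -1]
def Rm : Matrix (Fin 2) (Fin 2) ℝ := !![0, -1; 1, 0]
def Pm : Matrix (Fin 2) (Fin 2) ℝ := !![0, 1; 1, 0]

/-- `c_k = √(k(n−k))`. -/
def cc (n k : ℕ) : ℝ := Real.sqrt (k * (n - k : ℕ))

/-- The 2n×2n matrix, viewed as an n×n array of 2×2 blocks, whose only nonzero blocks are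
`B k` at superdiagonal block positions (k, k+1) for 1-based `k = 1,…,n−1`. -/
def blkSup (n : ℕ) (B : ℕ → Matrix (Fin 2) (Fin 2) ℝ) :
    Matrix (Fin (2*n)) (Fin (2*n)) ℝ :=
  Matrix.of fun r c =>
    if (c:ℕ)/2 = (r:ℕ)/2 + 1 then
      B ((r:ℕ)/2 + 1) ⟨(r:ℕ) % 2, by omega⟩ ⟨(c:ℕ) % 2, by omega⟩
    else 0

/-- The matrix `X` (n even): superdiagonal blocks `c_k I₂` for `k < n/2`,
`c_{n/2} T` at `k = n/2`, and `−c_k I₂` for `k > n/2`. -/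
def Xeven (n : ℕ) : Matrix (Fin (2*n)) (Fin (2*n)) ℝ :=
  blkSup n (fun k =>
    if k < n/2 then cc n k • I2
    else if k = n/2 then cc n (n/2) • Tm
    else -(cc n k) • I2)

/-- The matrix `Y` (n even): superdiagonal blocks `c_k R` for `k ≠ n/2` and
`c_{n/2} P` at `k = n/2`. -/
def Yeven (n : ℕ) : Matrix (Fin (2*n)) (Fin (2*n)) ℝ :=
  blkSup n (fun k => if k = n/2 then cc n (n/2) • Pm else cc n k • Rm)

open Finset

theorem NormedSpace.exp_eq_sum_range_of_pow_eq_zero (𝕂 : Type*) {𝔸 : Type*} [Field 𝕂]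
    [CharZero 𝕂] [Ring 𝔸] [Algebra 𝕂 𝔸] [TopologicalSpace 𝔸] [IsTopologicalRing 𝔸]
    {a : 𝔸} {N : ℕ} (h : a ^ N = 0) :
    NormedSpace.exp a = ∑ k ∈ range N, ((k.factorial : 𝕂)⁻¹) • a ^ k := by
  rw [NormedSpace.exp_eq_tsum 𝕂]
  refine tsum_eq_sum fun k hk => ?_
  rw [← Nat.add_sub_cancel' (not_lt.mp (mem_range.not.mp hk)), pow_add, h, zero_mul, smul_zero]

def blockProd (B : ℕ → Matrix (Fin 2) (Fin 2) ℝ) : ℕ → Matrix (Fin 2) (Fin 2) ℝ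
  | 0 => 1
  | m + 1 => blockProd B m * B (m + 1)

theorem det_blockProd (B : ℕ → Matrix (Fin 2) (Fin 2) ℝ) (m : ℕ) :
    (blockProd B m).det = ∏ k ∈ range m, (B (k + 1)).det := by
  induction m with
  | zero => simp [blockProd]
  | succ m ih => rw [blockProd, det_mul, ih, prod_range_succ]

section BlockSuperdiagonal

variable {n : ℕ} (B : ℕ → Matrix (Fin 2) (Fin 2) ℝ)

theorem smul_blkSup_add_smul_blkSup (B' : ℕ → Matrix (Fin 2) (Fin 2) ℝ) (α β : ℝ) :
    α • blkSup n B + β • blkSup n B' = blkSup n (fun k => α • B k + β • B' k) := by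
  ext r c
  simp only [blkSup, Matrix.add_apply, Matrix.smul_apply, of_apply]
  split_ifs <;> simp

theorem blkSup_apply_of_ne {r c : Fin (2 * n)} (h : (c : ℕ) / 2 ≠ r / 2 + 1) :
    blkSup n B r c = 0 :=
  if_neg h

theorem blkSup_apply_succ {m : ℕ} {r c : Fin (2 * n)} (t s : Fin 2)
    (hr : (r : ℕ) = 2 * m + t) (hc : (c : ℕ) = 2 * (m + 1) + s) :
    blkSup n B r c = B (m + 1) t s := by
  have := t.isLt
  have := s.isLt
  simp only [blkSup, of_apply]
  rw [if_pos (by omega), show (r : ℕ) / 2 + 1 = m + 1 by omega]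
  congr 1 <;> exact Fin.ext (by simp; omega)

theorem blkSup_pow_apply_of_ne (m : ℕ) {r c : Fin (2 * n)} (h : (c : ℕ) / 2 ≠ r / 2 + m) :
    (blkSup n B ^ m) r c = 0 := by
  induction m generalizing c with
  | zero => exact one_apply_ne (by rintro rfl; omega)
  | succ m ih =>
    rw [pow_succ, mul_apply]
    refine sum_eq_zero fun j _ => ?_
    by_cases hj : (j : ℕ) / 2 = r / 2 + m
    · rw [blkSup_apply_of_ne B (by omega), mul_zero]
    · rw [ih hj, zero_mul]

theorem blkSup_pow_of_le {m : ℕ} (h : n ≤ m) : blkSup n B ^ m = 0 := by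
  ext r c
  exact blkSup_pow_apply_of_ne B m (by omega)

theorem blkSup_pow_apply_first_row {m : ℕ} (hm : m < n) {r c : Fin (2 * n)} (t s : Fin 2)
    (hr : (r : ℕ) = t) (hc : (c : ℕ) = 2 * m + s) :
    (blkSup n B ^ m) r c = blockProd B m t s := by
  induction m generalizing c s with
  | zero =>
    simp only [pow_zero, blockProd, one_apply, Fin.ext_iff]
    grind
  | succ m ih =>
    let j₀ : Fin (2 * n) := ⟨2 * m, by omega⟩
    let j₁ : Fin (2 * n) := ⟨2 * m + 1, by omega⟩
    have hs := s.isLt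
    rw [pow_succ, mul_apply, Fintype.sum_eq_add j₀ j₁ (by simp [j₀, j₁, Fin.ext_iff])]
    · rw [ih (by omega) 0 rfl, ih (by omega) 1 rfl, blkSup_apply_succ B 0 s rfl hc,
        blkSup_apply_succ B 1 s rfl hc, blockProd, mul_apply, Fin.sum_univ_two]
    · rintro j ⟨h₀, h₁⟩
      simp only [j₀, j₁, ne_eq, Fin.ext_iff] at h₀ h₁
      rw [blkSup_apply_of_ne B (by omega), mul_zero]

theorem exp_blkSup_apply_last_col {r c : Fin (2 * n)} (t s : Fin 2)
    (hr : (r : ℕ) = t) (hc : (c : ℕ) = 2 * (n - 1) + s) :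
    NormedSpace.exp (blkSup n B) r c = ((n - 1).factorial : ℝ)⁻¹ * blockProd B (n - 1) t s := by
  have := t.isLt
  have := s.isLt
  rw [NormedSpace.exp_eq_sum_range_of_pow_eq_zero ℝ (blkSup_pow_of_le B le_rfl), Matrix.sum_apply,
    sum_eq_single (n - 1)]
  · rw [Matrix.smul_apply, blkSup_pow_apply_first_row B (by omega) t s hr hc, smul_eq_mul]
  · intro k _ hk
    rw [Matrix.smul_apply, blkSup_pow_apply_of_ne B k (by omega), smul_zero]
  · simp only [mem_range]
    omega

theorem exp_blkSup_topRight_det (hn : 1 ≤ n) (E : Matrix (Fin (2 * n)) (Fin (2 * n)) ℝ)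
    (hE : E = NormedSpace.exp (blkSup n B)) :
    E ⟨0, by omega⟩ ⟨2 * n - 2, by omega⟩ * E ⟨1, by omega⟩ ⟨2 * n - 1, by omega⟩ -
      E ⟨0, by omega⟩ ⟨2 * n - 1, by omega⟩ * E ⟨1, by omega⟩ ⟨2 * n - 2, by omega⟩ =
      ((n - 1).factorial : ℝ)⁻¹ ^ 2 * ∏ k ∈ range (n - 1), (B (k + 1)).det := by
  have hE' (r c : Fin (2 * n)) (t s : Fin 2) (hr : (r : ℕ) = t) (hc : (c : ℕ) = 2 * (n - 1) + s) :
      E r c = ((n - 1).factorial : ℝ)⁻¹ * blockProd B (n - 1) t s :=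
    hE ▸ exp_blkSup_apply_last_col B t s hr hc
  rw [hE' _ _ 0 0 rfl (by simp; omega), hE' _ _ 1 1 rfl (by simp; omega),
    hE' _ _ 0 1 rfl (by simp; omega), hE' _ _ 1 0 rfl (by simp; omega)]
  rw [← det_blockProd, det_fin_two]
  ring

end BlockSuperdiagonal

def Xblock (n k : ℕ) : Matrix (Fin 2) (Fin 2) ℝ :=
  if k < n / 2 then cc n k • I2 else if k = n / 2 then cc n (n / 2) • Tm else -(cc n k) • I2

def Yblock (n k : ℕ) : Matrix (Fin 2) (Fin 2) ℝ :=
  if k = n / 2 then cc n (n / 2) • Pm else cc n k • Rm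

theorem Xeven_eq_blkSup (n : ℕ) : Xeven n = blkSup n (Xblock n) := rfl

theorem Yeven_eq_blkSup (n : ℕ) : Yeven n = blkSup n (Yblock n) := rfl

theorem cc_sq_pos {n k : ℕ} (hk₀ : 0 < k) (hkn : k < n) : 0 < cc n k ^ 2 := by
  have : 0 < n - k := by omega
  rw [cc, Real.sq_sqrt (by positivity)]
  positivity

theorem det_smul_Xblock_add_smul_Yblock (n k : ℕ) (α β : ℝ) :
    (α • Xblock n k + β • Yblock n k).det =
      (if k = n / 2 then -1 else 1) * (cc n k ^ 2 * (α ^ 2 + β ^ 2)) := by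
  rcases lt_trichotomy k (n / 2) with hk | rfl | hk
  · simp [Xblock, Yblock, hk, hk.ne, det_fin_two, I2, Rm]
    ring
  · simp [Xblock, Yblock, det_fin_two, Tm, Pm]
    ring
  · have hk' : ¬k < n / 2 := by omega
    simp [Xblock, Yblock, hk', hk.ne', det_fin_two, I2, Rm]
    ring

theorem prod_det_smul_Xblock_add_smul_Yblock_neg {n : ℕ} (hn : 2 ≤ n) {α β : ℝ}
    (hαβ : 0 < α ^ 2 + β ^ 2) :
    ∏ k ∈ range (n - 1), (α • Xblock n (k + 1) + β • Yblock n (k + 1)).det < 0 := by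
  have hmid : n / 2 - 1 ∈ range (n - 1) := mem_range.mpr (by omega)
  rw [← mul_prod_erase _ _ hmid]
  refine mul_neg_of_neg_of_pos ?_ (prod_pos fun k hk => ?_)
  · rw [det_smul_Xblock_add_smul_Yblock, if_pos (by omega), neg_one_mul, neg_neg_iff_pos]
    exact mul_pos (cc_sq_pos (by omega) (by omega)) hαβ
  · rw [mem_erase, mem_range] at hk
    rw [det_smul_Xblock_add_smul_Yblock, if_neg (by omega), one_mul]
    exact mul_pos (cc_sq_pos (by omega) (by omega)) hαβ

theorem top_right_block_det_neg (n : ℕ) (hn : 2 ≤ n)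
    (α β : ℝ) (hab : (α, β) ≠ (0, 0)) (M : Matrix (Fin (2*n)) (Fin (2*n)) ℝ)
    (hM : M = NormedSpace.exp (α • Xeven n + β • Yeven n)) :
    M ⟨0, by omega⟩ ⟨2*n - 2, by omega⟩ * M ⟨1, by omega⟩ ⟨2*n - 1, by omega⟩ -
      M ⟨0, by omega⟩ ⟨2*n - 1, by omega⟩ * M ⟨1, by omega⟩ ⟨2*n - 2, by omega⟩ < 0 := by
  have hαβ : 0 < α ^ 2 + β ^ 2 := by
    have : α ≠ 0 ∨ β ≠ 0 := by
      contrapose! hab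
      simp [hab]
    rcases this with h | h <;> positivity
  rw [Xeven_eq_blkSup, Yeven_eq_blkSup, smul_blkSup_add_smul_blkSup] at hM
  rw [exp_blkSup_topRight_det _ (by omega) M hM]
  exact mul_neg_of_pos_of_neg (by positivity) (prod_det_smul_Xblock_add_smul_Yblock_neg hn hαβ)

end
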